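/- Let A be an m×n real matrix with rank ρ and k ≤ ρ. Let Q ∈ R^{m×k} have orthonormal columns, each of which lies in the column space of A. Then ‖U_k U_kᵀ − Q Qᵀ‖_2 = ‖U_{ρ−k}ᵀ Q‖_2. -/

import Mathlib

open Matrix MeasureTheory ProbabilityTheory
open scoped Matrix.Norms.L2Operator

noncomputable section

/-- Euclidean (ℓ²) norm of a vector. -/
def vnorm {m : ℕ} (x : Fin m → ℝ) : ℝ := ‖(WithLp.equiv 2 (Fin m → ℝ)).symm x‖

/-- Restored helper (removed from Mathlib): `Mᵀ * M` is Hermitian for real `M`. -/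
theorem Matrix.isHermitian_transpose_mul_self {m n : ℕ} (M : Matrix (Fin m) (Fin n) ℝ) :
    (Mᵀ * M).IsHermitian := by
  have h := Matrix.isHermitian_conjTranspose_mul_self M
  rwa [Matrix.conjTranspose_eq_transpose_of_trivial] at h

/-- `sval M i` is the `i`-th largest singular value of `M` (0-indexed), i.e. the square root of
the `i`-th largest eigenvalue of `MᵀM`. -/
def sval {m n : ℕ} (M : Matrix (Fin m) (Fin n) ℝ) (i : Fin n) : ℝ :=
  Real.sqrt ((Matrix.isHermitian_transpose_mul_self M).eigenvalues
    (Tuple.sort (Matrix.isHermitian_transpose_mul_self M).eigenvalues i.rev))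

/-- `P` is the Moore–Penrose pseudoinverse of `M` (the four Penrose conditions). -/
def IsMoorePenrose {m n : ℕ} (M : Matrix (Fin m) (Fin n) ℝ)
    (P : Matrix (Fin n) (Fin m) ℝ) : Prop :=
  M * P * M = M ∧ P * M * P = P ∧ (M * P)ᵀ = M * P ∧ (P * M)ᵀ = P * M

/-- Column space of a matrix: the span of its columns. -/
def colSpace {m n : ℕ} (M : Matrix (Fin m) (Fin n) ℝ) : Submodule ℝ (Fin m → ℝ) :=
  Submodule.span ℝ (Set.range Mᵀ)

/-!
Write `Q = U W` with `W = Uᵀ Q`; this reduces the claim to `ℝ^ρ`, where `U_k` and `U_{ρ-k}`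
become complementary coordinate isometries `E₁`, `E₂`. With `X = E₁ᵀ W` and `Y = E₂ᵀ W` we have
`XᵀX + YᵀY = 1`, and `M = E₁E₁ᵀ - WWᵀ` satisfies `E₂ᵀ M = -Y Wᵀ`, so `‖Y‖ ≤ ‖M‖`, and
`MᵀM = E₁ (1 - XXᵀ) E₁ᵀ + E₂ YYᵀ E₂ᵀ`. Because `X` is square, `XXᵀ` and `XᵀX` have the same
spectrum, so `‖1 - XXᵀ‖ = ‖1 - XᵀX‖ = ‖YᵀY‖ = ‖Y‖²`, which gives `‖M‖² ≤ ‖Y‖²`.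
-/

theorem EuclideanSpace.norm_toLp_sq {n : Type*} [Fintype n] (x : n → ℝ) :
    ‖(WithLp.toLp 2 x : EuclideanSpace ℝ n)‖ ^ 2 = x ⬝ᵥ x := by
  rw [EuclideanSpace.real_norm_sq_eq]
  simp [dotProduct, sq]

namespace Matrix

section Spectrum

variable {n : Type*} [Fintype n] [DecidableEq n]

theorem spectrum_mul_comm {K : Type*} [Field K] (A B : Matrix n n K) :
    spectrum K (A * B) = spectrum K (B * A) := by
  ext r
  rw [mem_spectrum_iff_isRoot_charpoly, mem_spectrum_iff_isRoot_charpoly, charpoly_mul_comm]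

theorem spectralRadius_eq_l2_opNNNorm {𝕜 : Type*} [RCLike 𝕜] {A : Matrix n n 𝕜}
    (hA : IsSelfAdjoint A) : spectralRadius 𝕜 A = ‖A‖₊ := by
  have h := ContinuousLinearMap.spectralRadius_eq_nnnorm _
    (hA.map (toEuclideanCLM (n := n) (𝕜 := 𝕜)))
  rwa [spectralRadius, AlgEquiv.spectrum_eq] at h

theorem isSelfAdjoint_one_sub_mul_transpose (X : Matrix n n ℝ) :
    IsSelfAdjoint (1 - X * Xᵀ) := by
  simp [IsSelfAdjoint, star_eq_conjTranspose, conjTranspose_eq_transpose_of_trivial, transpose_mul]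

theorem l2_opNorm_one_sub_mul_transpose_comm (X : Matrix n n ℝ) :
    ‖1 - X * Xᵀ‖ = ‖1 - Xᵀ * X‖ := by
  have hspec : spectrum ℝ (1 - X * Xᵀ) = spectrum ℝ (1 - Xᵀ * X) := by
    have h₁ := spectrum.singleton_sub_eq (X * Xᵀ) (1 : ℝ)
    have h₂ := spectrum.singleton_sub_eq (Xᵀ * X) (1 : ℝ)
    rw [map_one] at h₁ h₂
    rw [← h₁, ← h₂, spectrum_mul_comm]
  have h := isSelfAdjoint_one_sub_mul_transpose Xᵀ
  rw [transpose_transpose] at h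
  rw [← coe_nnnorm, ← coe_nnnorm, NNReal.coe_inj, ← ENNReal.coe_inj,
    ← spectralRadius_eq_l2_opNNNorm (isSelfAdjoint_one_sub_mul_transpose X),
    ← spectralRadius_eq_l2_opNNNorm h, spectralRadius, spectralRadius, hspec]

end Spectrum

section RealL2

variable {m n p : Type*} [Fintype m] [Fintype n] [Fintype p]

theorem l2_opNorm_transpose [DecidableEq m] [DecidableEq n] (A : Matrix m n ℝ) :
    ‖Aᵀ‖ = ‖A‖ := by
  rw [← conjTranspose_eq_transpose_of_trivial, l2_opNorm_conjTranspose]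

theorem l2_opNorm_transpose_mul_self [DecidableEq n] (A : Matrix m n ℝ) :
    ‖Aᵀ * A‖ = ‖A‖ ^ 2 := by
  rw [← conjTranspose_eq_transpose_of_trivial, l2_opNorm_conjTranspose_mul_self, sq]

theorem l2_opNorm_mul_of_transpose_mul_self_eq_one [DecidableEq n] [DecidableEq p]
    {U : Matrix m n ℝ} (hU : Uᵀ * U = 1) (B : Matrix n p ℝ) : ‖U * B‖ = ‖B‖ := by
  rw [← sq_eq_sq₀ (norm_nonneg _) (norm_nonneg _), ← l2_opNorm_transpose_mul_self,
    ← l2_opNorm_transpose_mul_self, transpose_mul, Matrix.mul_assoc, ← Matrix.mul_assoc Uᵀ, hU,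
    Matrix.one_mul]

theorem l2_opNorm_mul_transpose_of_transpose_mul_self_eq_one [DecidableEq m] [DecidableEq n]
    [DecidableEq p] {U : Matrix m n ℝ} (hU : Uᵀ * U = 1) (B : Matrix p n ℝ) :
    ‖B * Uᵀ‖ = ‖B‖ := by
  rw [← l2_opNorm_transpose, transpose_mul, transpose_transpose,
    l2_opNorm_mul_of_transpose_mul_self_eq_one hU, l2_opNorm_transpose]

theorem l2_opNorm_le_one_of_transpose_mul_self_eq_one [DecidableEq n] {U : Matrix m n ℝ}
    (hU : Uᵀ * U = 1) : ‖U‖ ≤ 1 := by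
  rw [← U.mul_one, l2_opNorm_mul_of_transpose_mul_self_eq_one hU, ← diagonal_one,
    l2_opNorm_diagonal]
  exact pi_norm_le_iff_of_nonneg zero_le_one |>.mpr fun _ => norm_one.le

theorem mulVec_dotProduct_mulVec (A : Matrix m n ℝ) (B : Matrix m p ℝ) (x : n → ℝ)
    (y : p → ℝ) : A *ᵥ x ⬝ᵥ B *ᵥ y = x ⬝ᵥ (Aᵀ * B) *ᵥ y := by
  rw [← mulVec_mulVec, dotProduct_mulVec x, vecMul_transpose]

theorem mulVec_dotProduct_self_le_of_l2_opNorm_le [DecidableEq n] {A : Matrix m n ℝ} {c : ℝ}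
    (hA : ‖A‖ ≤ c) (x : n → ℝ) : A *ᵥ x ⬝ᵥ A *ᵥ x ≤ c ^ 2 * (x ⬝ᵥ x) := by
  rw [← EuclideanSpace.norm_toLp_sq, ← EuclideanSpace.norm_toLp_sq, ← mul_pow]
  exact pow_le_pow_left₀ (norm_nonneg _)
    ((A.l2_opNorm_mulVec (WithLp.toLp 2 x)).trans (by gcongr)) 2

theorem l2_opNorm_le_of_mulVec_dotProduct_self_le [DecidableEq n] {A : Matrix m n ℝ} {c : ℝ}
    (hc : 0 ≤ c)     (h : ∀ x, A *ᵥ x ⬝ᵥ A *ᵥ x ≤ c ^ 2 * (x ⬝ᵥ x)) : ‖A‖ ≤ c := by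
  rw [l2_opNorm_def]
  refine ContinuousLinearMap.opNorm_le_bound _ hc fun x => ?_
  rw [← sq_le_sq₀ (norm_nonneg _) (by positivity), mul_pow]
  have hx := h x.ofLp
  rw [← EuclideanSpace.norm_toLp_sq, ← EuclideanSpace.norm_toLp_sq] at hx
  exact hx

end RealL2

section ComplementaryIsometries

variable {ι κ₁ κ₂ : Type*} [Fintype ι] [Fintype κ₁] [Fintype κ₂] [DecidableEq ι] [DecidableEq κ₁]
  [DecidableEq κ₂] {E₁ : Matrix ι κ₁ ℝ} {E₂ : Matrix ι κ₂ ℝ}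

theorem l2_opNorm_mul_mul_transpose_add_le (h₁ : E₁ᵀ * E₁ = 1) (h₂ : E₂ᵀ * E₂ = 1)
    (h₁₂ : E₁ᵀ * E₂ = 0) (hsum : E₁ * E₁ᵀ + E₂ * E₂ᵀ = 1) {A : Matrix κ₁ κ₁ ℝ}
    {B : Matrix κ₂ κ₂ ℝ} {c : ℝ} (hA : ‖A‖ ≤ c) (hB : ‖B‖ ≤ c) :
    ‖E₁ * A * E₁ᵀ + E₂ * B * E₂ᵀ‖ ≤ c := by
  have hc : 0 ≤ c := (norm_nonneg A).trans hA
  refine l2_opNorm_le_of_mulVec_dotProduct_self_le hc fun v => ?_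
  set a := E₁ᵀ *ᵥ v
  set b := E₂ᵀ *ᵥ v
  have hv : a ⬝ᵥ a + b ⬝ᵥ b = v ⬝ᵥ v := by
    rw [mulVec_dotProduct_mulVec, mulVec_dotProduct_mulVec, ← dotProduct_add, ← add_mulVec,
      transpose_transpose, transpose_transpose, hsum, one_mulVec]
  have hNv : (E₁ * A * E₁ᵀ + E₂ * B * E₂ᵀ) *ᵥ v ⬝ᵥ (E₁ * A * E₁ᵀ + E₂ * B * E₂ᵀ) *ᵥ v =
      A *ᵥ a ⬝ᵥ A *ᵥ a + B *ᵥ b ⬝ᵥ B *ᵥ b := by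
    have h₂₁ : E₂ᵀ * E₁ = 0 := by rw [← transpose_transpose (E₂ᵀ * E₁), transpose_mul,
      transpose_transpose, h₁₂, transpose_zero]
    simp only [add_mulVec, ← mulVec_mulVec, add_dotProduct, dotProduct_add,
      mulVec_dotProduct_mulVec E₁, mulVec_dotProduct_mulVec E₂, h₁, h₂, h₁₂, h₂₁, one_mulVec,
      zero_mulVec, dotProduct_zero, add_zero, zero_add]
    rfl
  rw [hNv, ← hv, mul_add]
  exact add_le_add (mulVec_dotProduct_self_le_of_l2_opNorm_le hA a)
    (mulVec_dotProduct_self_le_of_l2_opNorm_le hB b)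

theorem l2_opNorm_mul_transpose_sub_mul_transpose (h₁ : E₁ᵀ * E₁ = 1) (h₂ : E₂ᵀ * E₂ = 1)
    (h₁₂ : E₁ᵀ * E₂ = 0) (hsum : E₁ * E₁ᵀ + E₂ * E₂ᵀ = 1) {W : Matrix ι κ₁ ℝ}
    (hW : Wᵀ * W = 1) : ‖E₁ * E₁ᵀ - W * Wᵀ‖ = ‖E₂ᵀ * W‖ := by
  set X := E₁ᵀ * W
  set Y := E₂ᵀ * W
  set M := E₁ * E₁ᵀ - W * Wᵀ
  have hW_eq : W = E₁ * X + E₂ * Y := by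
    rw [← Matrix.mul_assoc, ← Matrix.mul_assoc, ← Matrix.add_mul, hsum, Matrix.one_mul]
  have hXY : Xᵀ * X + Yᵀ * Y = 1 := by
    simp only [X, Y, transpose_mul, transpose_transpose, Matrix.mul_assoc, ← Matrix.mul_add]
    rw [← Matrix.mul_assoc E₁, ← Matrix.mul_assoc E₂, ← Matrix.add_mul, hsum, Matrix.one_mul, hW]
  have hE₂M : E₂ᵀ * M = -(Y * Wᵀ) := by
    rw [Matrix.mul_sub, ← Matrix.mul_assoc, ← transpose_transpose (E₂ᵀ * E₁), transpose_mul,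
      transpose_transpose, h₁₂, transpose_zero, Matrix.zero_mul, ← Matrix.mul_assoc, zero_sub]
  have hMM : Mᵀ * M = E₁ * (1 - X * Xᵀ) * E₁ᵀ + E₂ * (Y * Yᵀ) * E₂ᵀ := by
    have hP : E₁ * E₁ᵀ * (E₁ * E₁ᵀ) = E₁ * E₁ᵀ := by
      rw [Matrix.mul_assoc, ← Matrix.mul_assoc E₁ᵀ, h₁, Matrix.one_mul]
    have hR : W * Wᵀ * (W * Wᵀ) = W * Wᵀ := by
      rw [Matrix.mul_assoc, ← Matrix.mul_assoc Wᵀ, hW, Matrix.one_mul]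
    have hMt : Mᵀ = M := by simp only [M, transpose_sub, transpose_mul, transpose_transpose]
    have hPR : Mᵀ * M = E₁ * E₁ᵀ - E₁ * X * Wᵀ - W * Xᵀ * E₁ᵀ + W * Wᵀ := by
      rw [hMt, sub_mul, mul_sub, mul_sub, hP, hR]
      simp only [X, transpose_mul, transpose_transpose, Matrix.mul_assoc]
      abel
    rw [hPR, hW_eq]
    simp only [transpose_add, transpose_mul, Matrix.add_mul, Matrix.mul_add, Matrix.mul_sub,
      Matrix.sub_mul, Matrix.mul_one, Matrix.mul_assoc]
    abel
  have hY : ‖Y‖ ≤ ‖M‖ := calc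
    ‖Y‖ = ‖E₂ᵀ * M‖ := by
      rw [hE₂M, norm_neg, l2_opNorm_mul_transpose_of_transpose_mul_self_eq_one hW]
    _ ≤ ‖E₂ᵀ‖ * ‖M‖ := l2_opNorm_mul _ _
    _ ≤ ‖M‖ := by
      rw [l2_opNorm_transpose]
      exact mul_le_of_le_one_left (norm_nonneg _)
        (l2_opNorm_le_one_of_transpose_mul_self_eq_one h₂)
  have hM : ‖M‖ ^ 2 ≤ ‖Y‖ ^ 2 := by
    rw [← l2_opNorm_transpose_mul_self, hMM]
    refine l2_opNorm_mul_mul_transpose_add_le h₁ h₂ h₁₂ hsum (le_of_eq ?_) (le_of_eq ?_)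
    · rw [l2_opNorm_one_sub_mul_transpose_comm, ← l2_opNorm_transpose_mul_self, ← hXY,
        add_sub_cancel_left]
    · rw [← l2_opNorm_transpose Y, ← l2_opNorm_transpose_mul_self, transpose_transpose]
  exact le_antisymm ((sq_le_sq₀ (norm_nonneg _) (norm_nonneg _)).mp hM) hY

end ComplementaryIsometries

section Selection

variable {R ι κ₁ κ₂ : Type*} [Semiring R] [Fintype ι] [DecidableEq ι]

theorem transpose_one_submatrix_mul_one_submatrix {κ κ' : Type*} (f : κ → ι) (g : κ' → ι) :
    ((1 : Matrix ι ι R).submatrix id f)ᵀ * (1 : Matrix ι ι R).submatrix id g =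
      (1 : Matrix ι ι R).submatrix f g := by
  rw [transpose_submatrix, transpose_one, ← submatrix_mul _ _ _ _ _ Function.bijective_id,
    Matrix.one_mul]

theorem one_submatrix_mul_transpose_add [Fintype κ₁] [Fintype κ₂] (e : κ₁ ⊕ κ₂ ≃ ι) :
    (1 : Matrix ι ι R).submatrix id (e ∘ Sum.inl) * ((1 : Matrix ι ι R).submatrix id
        (e ∘ Sum.inl))ᵀ + (1 : Matrix ι ι R).submatrix id (e ∘ Sum.inr) *
      ((1 : Matrix ι ι R).submatrix id (e ∘ Sum.inr))ᵀ = 1 := by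
  have hF : fromCols ((1 : Matrix ι ι R).submatrix id (e ∘ Sum.inl))
      ((1 : Matrix ι ι R).submatrix id (e ∘ Sum.inr)) = (1 : Matrix ι ι R).submatrix id e := by
    ext _ (_ | _) <;> rfl
  rw [← fromCols_mul_fromRows, ← transpose_fromCols, hF, transpose_submatrix, transpose_one,
    submatrix_mul_equiv, Matrix.one_mul, submatrix_id_id]

theorem l2_opNorm_submatrix_mul_transpose_sub_mul_transpose {m : Type*} [Fintype m]
    [DecidableEq m] [Fintype κ₁] [Fintype κ₂] [DecidableEq κ₁] [DecidableEq κ₂]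
    {U : Matrix m ι ℝ} (hU : Uᵀ * U = 1) (e : κ₁ ⊕ κ₂ ≃ ι) {Q : Matrix m κ₁ ℝ}
    (hQ : Qᵀ * Q = 1) (hQU : U * (Uᵀ * Q) = Q) :
    ‖U.submatrix id (e ∘ Sum.inl) * (U.submatrix id (e ∘ Sum.inl))ᵀ - Q * Qᵀ‖ =
      ‖(U.submatrix id (e ∘ Sum.inr))ᵀ * Q‖ := by
  set W := Uᵀ * Q
  set E₁ := (1 : Matrix ι ι ℝ).submatrix id (e ∘ Sum.inl)
  set E₂ := (1 : Matrix ι ι ℝ).submatrix id (e ∘ Sum.inr)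
  have hW : Wᵀ * W = 1 := by
    rw [transpose_mul, transpose_transpose, Matrix.mul_assoc, hQU, hQ]
  have h₁ : E₁ᵀ * E₁ = 1 := by
    rw [transpose_one_submatrix_mul_one_submatrix,
      submatrix_one _ (e.injective.comp Sum.inl_injective)]
  have h₂ : E₂ᵀ * E₂ = 1 := by
    rw [transpose_one_submatrix_mul_one_submatrix,
      submatrix_one _ (e.injective.comp Sum.inr_injective)]
  have h₁₂ : E₁ᵀ * E₂ = 0 := by
    rw [transpose_one_submatrix_mul_one_submatrix]
    ext a b
    simp [e.injective.eq_iff]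
  have hlhs : U * E₁ * (U * E₁)ᵀ - U * W * (U * W)ᵀ = U * (E₁ * E₁ᵀ - W * Wᵀ) * Uᵀ := by
    simp only [transpose_mul, Matrix.mul_sub, Matrix.sub_mul, Matrix.mul_assoc]
  have hrhs : (U * E₂)ᵀ * (U * W) = E₂ᵀ * W := by
    rw [transpose_mul, Matrix.mul_assoc, ← Matrix.mul_assoc Uᵀ, hU, Matrix.one_mul]
  have hU₁ : U.submatrix id (e ∘ Sum.inl) = U * E₁ := (mul_submatrix_one (Equiv.refl ι) _ U).symm
  have hU₂ : U.submatrix id (e ∘ Sum.inr) = U * E₂ := (mul_submatrix_one (Equiv.refl ι) _ U).symm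
  rw [hU₁, hU₂, ← hQU, hlhs, hrhs,
    l2_opNorm_mul_transpose_of_transpose_mul_self_eq_one hU,
    l2_opNorm_mul_of_transpose_mul_self_eq_one hU]
  exact l2_opNorm_mul_transpose_sub_mul_transpose h₁ h₂ h₁₂ (one_submatrix_mul_transpose_add e) hW

end Selection

end Matrix

theorem mul_transpose_mul_eq_self_of_mem_colSpace {m n r k : ℕ} {U : Matrix (Fin m) (Fin r) ℝ}
    (hU : Uᵀ * U = 1) (B : Matrix (Fin r) (Fin n) ℝ) {Q : Matrix (Fin m) (Fin k) ℝ}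
    (hQ : ∀ j, Qᵀ j ∈ colSpace (U * B)) : U * (Uᵀ * Q) = Q := by
  ext i j
  obtain ⟨y, hy⟩ : Qᵀ j ∈ LinearMap.range (U * B).mulVecLin := by
    rw [range_mulVecLin]
    exact hQ j
  have hcol : U *ᵥ (Uᵀ *ᵥ Qᵀ j) = Qᵀ j := by
    rw [← hy, mulVecLin_apply, ← mulVec_mulVec, mulVec_mulVec _ Uᵀ U, hU, one_mulVec]
  exact congrFun hcol i

/-- if `Q` has `k` orthonormal columns lying in the column space of `A`, then
`‖U_k U_kᵀ − Q Qᵀ‖₂ = ‖U_{ρ−k}ᵀ Q‖₂`. -/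
theorem stmt_7 (m n ρ k : ℕ) (hkρ : k ≤ ρ)
    (A : Matrix (Fin m) (Fin n) ℝ)
    (U : Matrix (Fin m) (Fin ρ) ℝ) (V : Matrix (Fin n) (Fin ρ) ℝ) (σ : Fin ρ → ℝ)
    (hU : Uᵀ * U = 1)
    (hA : A = U * Matrix.diagonal σ * Vᵀ)
    (Q : Matrix (Fin m) (Fin k) ℝ) (hQ : Qᵀ * Q = 1)
    (hQcol : ∀ j : Fin k, Qᵀ j ∈ colSpace A) :
    ‖U.submatrix id (Fin.castLE hkρ) * (U.submatrix id (Fin.castLE hkρ))ᵀ - Q * Qᵀ‖ =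
      ‖(U.submatrix id
          (fun j : Fin (ρ - k) => (⟨k + j, by have := j.isLt; omega⟩ : Fin ρ)))ᵀ * Q‖ := by
  have hQU : U * (Uᵀ * Q) = Q := mul_transpose_mul_eq_self_of_mem_colSpace hU (diagonal σ * Vᵀ)
    (by rwa [← Matrix.mul_assoc, ← hA])
  exact l2_opNorm_submatrix_mul_transpose_sub_mul_transpose hU
    (finSumFinEquiv.trans (finCongr (Nat.add_sub_cancel' hkρ))) hQ hQU
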